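/- Let R = GF(2)[c]/(c³) and S = R[[d]]. The element A = (1 + c)³·(1 + c + d)·(1 + d + c²d)·(1 + d)^{-1} is a unit in S, and for every natural number i the coefficient of c² in the d^i coefficient of A^{-1} equals 1 if i ≡ 2 or 3 (mod 4), and 0 if i ≡ 0 or 1 (mod 4). In particular, for i = 2^u(2v+1) with u ≥ 2 this coefficient equals 0. -/

import Mathlib

open Polynomial PowerSeries

noncomputable section

/-- The ring `R = GF(2)[c] / (c³)`. -/
abbrev R2 : Type := AdjoinRoot (Polynomial.X ^ 3 : Polynomial (ZMod 2))

/-- The class of the variable `c` in `R = GF(2)[c] / (c³)`. -/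
def cR : R2 := AdjoinRoot.root _

/-- The power series ring `S = R[[d]]`. -/
abbrev S2 : Type := PowerSeries R2

/-- The image of `c` in `S = R[[d]]`. -/
def cS : S2 := PowerSeries.C cR

/-- The variable `d` of `S = R[[d]]`. -/
def dS : S2 := PowerSeries.X

/-- The coefficient of `c²` of an element of `R = GF(2)[c] / (c³)`,
computed via the unique representative polynomial of degree `< 3`. -/
def coefc2 (x : R2) : ZMod 2 :=
  (AdjoinRoot.modByMonicHom (Polynomial.monic_X_pow 3) x).coeff 2

/-! In characteristic 2 we have `1 + d² = (1 + d)²`, and with `c³ = 0` the numerator of `A`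
factors as `(1 + d)(1 - (1 + c)d)`. Hence `A = 1 - (1 + c)d` and `A⁻¹ = ∑ (1 + c)ⁿ dⁿ`.
The `c²` coefficient of `(1 + c)ⁿ` is `n.choose 2`, which by Lucas' theorem is `⌊n / 2⌋` mod 2. -/

theorem two_eq_zero_R2 : (2 : R2) = 0 := by
  rw [← map_ofNat (algebraMap (ZMod 2) R2) 2, show (2 : ZMod 2) = 0 from rfl, map_zero]

theorem cR_pow_three : cR ^ 3 = 0 := by
  rw [cR, ← AdjoinRoot.mk_X, ← map_pow, AdjoinRoot.mk_self]

theorem coefc2_mk (p : (ZMod 2)[X]) : coefc2 (AdjoinRoot.mk _ p) = p.coeff 2 := by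
  conv_rhs => rw [← modByMonic_add_div p (Polynomial.X ^ 3)]
  rw [coefc2, AdjoinRoot.modByMonicHom_mk, coeff_add, Polynomial.coeff_X_pow_mul',
    if_neg (by decide), add_zero]

theorem coefc2_one_add_cR_pow (n : ℕ) : coefc2 ((1 + cR) ^ n) = n.choose 2 := by
  rw [cR, ← AdjoinRoot.mk_X, ← map_one (AdjoinRoot.mk _), ← map_add, ← map_pow, coefc2_mk,
    coeff_one_add_X_pow]

theorem natCast_choose_two_zmod_two (n : ℕ) :
    (n.choose 2 : ZMod 2) = if n % 4 = 2 ∨ n % 4 = 3 then 1 else 0 := by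
  have lucas : n.choose 2 ≡ n / 2 [MOD 2] := by
    simpa using (Choose.choose_modEq_choose_mod_mul_choose_div_nat (n := n) (k := 2) (p := 2))
  rw [(ZMod.natCast_eq_natCast_iff _ _ _).2 lucas, ← ZMod.natCast_mod]
  split_ifs with h
  · rw [show n / 2 % 2 = 1 by omega, Nat.cast_one]
  · rw [show n / 2 % 2 = 0 by omega, Nat.cast_zero]

theorem mul_eq_of_two_eq_zero_of_pow_three_eq_zero {S : Type*} [CommRing S] {c d : S}
    (h2 : (2 : S) = 0) (h3 : c ^ 3 = 0) :
    (1 + c) ^ 3 * (1 + c + d) * (1 + d + c ^ 2 * d) = (1 - (1 + c) * d) * (1 + d) := by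
  linear_combination
    (4 + 9 * d + 4 * d ^ 2 + c + 7 * c * d + 3 * c * d ^ 2 + 4 * c ^ 2 * d + c ^ 2 * d ^ 2
      + c ^ 3 * d) * h3 +
    (d + d ^ 2 + 2 * c + 4 * c * d + 2 * c * d ^ 2 + 3 * c ^ 2 + 5 * c ^ 2 * d
      + 2 * c ^ 2 * d ^ 2) * h2

theorem PowerSeries.mk_pow_mul_one_sub_C_mul_X {R : Type*} [CommRing R] (a : R) :
    mk (fun n => a ^ n) * (1 - C a * X) = 1 := by
  simpa [rescale_mk, rescale_X] using congrArg (rescale a) (mk_one_mul_one_sub_eq_one R)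

theorem swClass_eq_one_sub_C_mul_X :
    (1 + cS) ^ 3 * (1 + cS + dS) * (1 + dS + cS ^ 2 * dS) * Ring.inverse (1 + dS) =
      1 - PowerSeries.C (1 + cR) * PowerSeries.X := by
  have h2 : (2 : S2) = 0 := by rw [← map_ofNat PowerSeries.C 2, two_eq_zero_R2, map_zero]
  have h3 : cS ^ 3 = 0 := by rw [cS, ← map_pow, cR_pow_three, map_zero]
  have hunit : IsUnit (1 + dS) := by simp [isUnit_iff_constantCoeff, dS]
  rw [mul_eq_of_two_eq_zero_of_pow_three_eq_zero h2 h3, Ring.mul_inverse_cancel_right _ _ hunit]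
  simp [cS, dS]

theorem unit_and_coefc2_a_three :
    IsUnit ((1 + cS) ^ 3 * (1 + cS + dS) * (1 + dS + cS ^ 2 * dS) * Ring.inverse (1 + dS)) ∧
      (∀ i : ℕ,
        coefc2 (PowerSeries.coeff i
            (Ring.inverse
              ((1 + cS) ^ 3 * (1 + cS + dS) * (1 + dS + cS ^ 2 * dS) * Ring.inverse (1 + dS)))) =
          if i % 4 = 2 ∨ i % 4 = 3 then 1 else 0) ∧
      ∀ u v : ℕ, 2 ≤ u →
        coefc2 (PowerSeries.coeff (2 ^ u * (2 * v + 1))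
            (Ring.inverse
              ((1 + cS) ^ 3 * (1 + cS + dS) * (1 + dS + cS ^ 2 * dS) * Ring.inverse (1 + dS)))) = 0 := by
  have hmul := mk_pow_mul_one_sub_C_mul_X (1 + cR)
  have hinv : Ring.inverse (1 - PowerSeries.C (1 + cR) * PowerSeries.X) =
      mk fun n => (1 + cR) ^ n :=
    Ring.inverse_unit (Units.mkOfMulEqOne _ _ ((mul_comm _ _).trans hmul))
  have hcoef : ∀ i : ℕ, coefc2 (coeff i (mk fun n => (1 + cR) ^ n)) =
      if i % 4 = 2 ∨ i % 4 = 3 then 1 else 0 := fun i => by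
    rw [coeff_mk, coefc2_one_add_cR_pow, natCast_choose_two_zmod_two]
  rw [swClass_eq_one_sub_C_mul_X, hinv]
  refine ⟨.of_mul_eq_one _ ((mul_comm _ _).trans hmul), hcoef, fun u v hu => ?_⟩
  have h4 : 2 ^ 2 ∣ 2 ^ u * (2 * v + 1) := (pow_dvd_pow 2 hu).mul_right _
  rw [hcoef, if_neg (by omega)]

end
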